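/- The 5-dimensional nilpotent commutative associative algebra A₁₃ does not degenerate to A₁₂: the structure λ of A₁₂ does NOT lie in the closure of the GL(5,ℂ)-orbit O(μ) of the structure μ of A₁₃ (closure in the standard topology on the space of bilinear maps ℂ⁵ × ℂ⁵ → ℂ⁵). -/

import Mathlib

open ContinuousLinearMap

/-- The underlying space `ℂⁿ`. -/
abbrev Vn (n : ℕ) := Fin n → ℂ

/-- The space of bilinear maps `ℂⁿ × ℂⁿ → ℂⁿ` (as continuous linear maps in two
arguments), carrying its standard topology as a finite-dimensional complex vector space. -/
abbrev Bil (n : ℕ) := Vn n →L[ℂ] Vn n →L[ℂ] Vn n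

/-- The action of `GL(n, ℂ)` on bilinear maps: `(g · μ)(x, y) = g (μ (g⁻¹ x) (g⁻¹ y))`. -/
noncomputable def act {n : ℕ} (g : Vn n ≃L[ℂ] Vn n) (μ : Bil n) : Bil n :=
  ((compL ℂ (Vn n) (Vn n) (Vn n)).flip (g.symm : Vn n →L[ℂ] Vn n)).comp
    (((compL ℂ (Vn n) (Vn n) (Vn n)) (g : Vn n →L[ℂ] Vn n)).comp
      (μ.comp (g.symm : Vn n →L[ℂ] Vn n)))

@[simp] lemma act_apply {n : ℕ} (g : Vn n ≃L[ℂ] Vn n) (μ : Bil n) (x y : Vn n) :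
    act g μ x y = g (μ (g.symm x) (g.symm y)) := rfl

/-- The orbit `O(μ)` of a bilinear map under the `GL(n, ℂ)`-action. -/
noncomputable def orbit {n : ℕ} (μ : Bil n) : Set (Bil n) :=
  {ν | ∃ g : Vn n ≃L[ℂ] Vn n, ν = act g μ}

/-- The standard basis `e₁, …, e₅` of `ℂ⁵` (zero-indexed: `e i` is `e_{i+1}`). -/
def e (i : Fin 5) : Vn 5 := Pi.single i 1

/-- Multiplication table of the algebra `𝐀13` (entry `(i, j)` is `eᵢ · eⱼ`). -/
def tblA13 : Fin 5 → Fin 5 → Vn 5 :=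
  ![![0, e 4, 0, 0, 0],
   ![e 4, 0, 0, 0, 0],
   ![0, 0, e 3, e 4, 0],
   ![0, 0, e 4, 0, 0],
   ![0, 0, 0, 0, 0]]

/-- Multiplication table of the algebra `𝐀12` (entry `(i, j)` is `eᵢ · eⱼ`). -/
def tblA12 : Fin 5 → Fin 5 → Vn 5 :=
  ![![0, e 3, e 4, 0, 0],
   ![e 3, 0, 0, 0, 0],
   ![e 4, 0, 0, 0, 0],
   ![0, 0, 0, 0, 0],
   ![0, 0, 0, 0, 0]]

/-!
For `𝐀13` the hyperplane `x₃ = 0` multiplies all of `ℂ⁵` into the line `ℂ e₅`. Having some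
hyperplane `H` and line `L` with `ν(H, V) ⊆ L` is invariant under `GL(V)`, and it is a closed
condition on `ν` because (after normalising the functional cutting out `H` and the vector spanning
`L`) the pairs `(H, L)` range over a compact set. In `𝐀12` every hyperplane contains vectors whose
products span both `e₄` and `e₅`, so `𝐀12` is not in the orbit closure of `𝐀13`.
-/

open Filter Topology

theorem Filter.Tendsto.clm_apply {ι 𝕜 E F : Type*} [NontriviallyNormedField 𝕜]
    [NormedAddCommGroup E] [NormedSpace 𝕜 E] [NormedAddCommGroup F] [NormedSpace 𝕜 F]
    {l : Filter ι} {f : ι → E →L[𝕜] F} {x : ι → E} {f₀ : E →L[𝕜] F} {x₀ : E}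
    (hf : Tendsto f l (𝓝 f₀)) (hx : Tendsto x l (𝓝 x₀)) :
    Tendsto (fun i => f i (x i)) l (𝓝 (f₀ x₀)) :=
  (isBoundedBilinearMap_apply.continuous.tendsto _).comp (hf.prodMk_nhds hx)

section HyperplaneIntoLine

variable {E : Type*} [NormedAddCommGroup E] [NormedSpace ℂ E]

theorem Submodule.mem_span_singleton_of_tendsto {ι : Type*} {l : Filter ι} [l.NeBot]
    {v w : ι → E} {v₀ w₀ : E} (hv : Tendsto v l (𝓝 v₀)) (hw : Tendsto w l (𝓝 w₀))
    (hw₀ : w₀ ≠ 0) (hmem : ∀ᶠ i in l, v i ∈ ℂ ∙ w i) : v₀ ∈ ℂ ∙ w₀ := by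
  obtain ⟨χ, hχ⟩ : ∃ χ : StrongDual ℂ E, χ w₀ ≠ 0 := SeparatingDual.exists_ne_zero hw₀
  have hχw : Tendsto (fun i => χ (w i)) l (𝓝 (χ w₀)) := (χ.continuous.tendsto _).comp hw
  have hχv : Tendsto (fun i => χ (v i)) l (𝓝 (χ v₀)) := (χ.continuous.tendsto _).comp hv
  -- `χ` reads off the coefficient of `v i` along `w i` as soon as `χ (w i) ≠ 0`.
  have hcoeff : ∀ᶠ i in l, v i = (χ (v i) / χ (w i)) • w i := by
    filter_upwards [hmem, hχw.eventually_ne hχ] with i hi hne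
    obtain ⟨c, hc⟩ := Submodule.mem_span_singleton.mp hi
    rw [← hc, map_smul, smul_eq_mul, mul_div_cancel_right₀ _ hne]
  have hlim : v₀ = (χ v₀ / χ w₀) • w₀ :=
    tendsto_nhds_unique (hv.congr' hcoeff) ((hχv.div hχw hχ).smul hw)
  rw [hlim]
  exact Submodule.smul_mem _ _ (Submodule.mem_span_singleton_self w₀)

def HasHyperplaneIntoLine (ν : E →L[ℂ] E →L[ℂ] E) : Prop :=
  ∃ (φ : StrongDual ℂ E) (w : E), φ ≠ 0 ∧ w ≠ 0 ∧ ∀ x y, φ x = 0 → ν x y ∈ ℂ ∙ w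

theorem HasHyperplaneIntoLine.exists_norm_eq_one {ν : E →L[ℂ] E →L[ℂ] E}
    (h : HasHyperplaneIntoLine ν) :
    ∃ (φ : StrongDual ℂ E) (w : E), ‖φ‖ = 1 ∧ ‖w‖ = 1 ∧ ∀ x y, φ x = 0 → ν x y ∈ ℂ ∙ w := by
  obtain ⟨φ, w, hφ, hw, hker⟩ := h
  refine ⟨(‖φ‖⁻¹ : ℂ) • φ, (‖w‖⁻¹ : ℂ) • w, norm_smul_inv_norm hφ, norm_smul_inv_norm hw,
    fun x y hx => ?_⟩
  have hφx : φ x = 0 := by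
    simpa [inv_ne_zero, norm_ne_zero_iff.mpr hφ] using hx
  rw [Submodule.span_singleton_smul_eq (isUnit_iff_ne_zero.mpr (by simpa using hw))]
  exact hker x y hφx

theorem HasHyperplaneIntoLine.of_tendsto {ι : Type*} {l : Filter ι} [l.NeBot]
    {ν : ι → E →L[ℂ] E →L[ℂ] E} {φ : ι → StrongDual ℂ E} {w : ι → E}
    {ν₀ : E →L[ℂ] E →L[ℂ] E} {φ₀ : StrongDual ℂ E} {w₀ : E}
    (hν : Tendsto ν l (𝓝 ν₀)) (hφ : Tendsto φ l (𝓝 φ₀)) (hw : Tendsto w l (𝓝 w₀))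
    (hφ₀ : φ₀ ≠ 0) (hw₀ : w₀ ≠ 0)
    (hker : ∀ᶠ i in l, ∀ x y, φ i x = 0 → ν i x y ∈ ℂ ∙ w i) : HasHyperplaneIntoLine ν₀ := by
  refine ⟨φ₀, w₀, hφ₀, hw₀, fun x y hx => ?_⟩
  obtain ⟨z, hz⟩ := φ₀.exists_ne_zero hφ₀
  have hφz : Tendsto (fun i => φ i z) l (𝓝 (φ₀ z)) := hφ.clm_apply tendsto_const_nhds
  have hφx : Tendsto (fun i => φ i x) l (𝓝 0) := hx ▸ hφ.clm_apply tendsto_const_nhds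
  -- Project `x` into the hyperplane `ker (φ i)` along `z`.
  set x' : ι → E := fun i => x - (φ i x / φ i z) • z
  have hx' : Tendsto x' l (𝓝 x) := by
    simpa using tendsto_const_nhds.sub ((hφx.div hφz hz).smul_const z)
  have hx'_ker : ∀ᶠ i in l, φ i (x' i) = 0 := by
    filter_upwards [hφz.eventually_ne hz] with i hi
    simp [x', div_mul_cancel₀ _ hi]
  refine Submodule.mem_span_singleton_of_tendsto
    ((hν.clm_apply hx').clm_apply tendsto_const_nhds) hw hw₀ ?_
  filter_upwards [hker, hx'_ker] with i hi hi'
  exact hi _ y hi'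

theorem isClosed_setOf_hasHyperplaneIntoLine [FiniteDimensional ℂ E] :
    IsClosed {ν : E →L[ℂ] E →L[ℂ] E | HasHyperplaneIntoLine ν} := by
  refine IsSeqClosed.isClosed fun ν ν₀ hν hlim => ?_
  choose φ w hφ hw hker using fun n => (hν n).exists_norm_eq_one
  obtain ⟨p, hp, ψ, hψ, hpsi⟩ :=
    ((isCompact_sphere (0 : StrongDual ℂ E) 1).prod (isCompact_sphere (0 : E) 1)).tendsto_subseq
      (x := fun n => (φ n, w n)) fun n => ⟨by simpa using hφ n, by simpa using hw n⟩
  exact HasHyperplaneIntoLine.of_tendsto (hlim.comp hψ.tendsto_atTop)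
    ((continuous_fst.tendsto p).comp hpsi) ((continuous_snd.tendsto p).comp hpsi)
    (ne_zero_of_mem_sphere one_ne_zero ⟨_, hp.1⟩) (ne_zero_of_mem_sphere one_ne_zero ⟨_, hp.2⟩)
    (Eventually.of_forall fun n => hker (ψ n))

end HyperplaneIntoLine

theorem HasHyperplaneIntoLine.act {n : ℕ} {ν : Bil n} (h : HasHyperplaneIntoLine ν)
    (g : Vn n ≃L[ℂ] Vn n) : HasHyperplaneIntoLine (act g ν) := by
  obtain ⟨φ, w, hφ, hw, hker⟩ := h
  refine ⟨φ.comp (g.symm : Vn n →L[ℂ] Vn n), g w, ?_, by simpa using hw, fun x y hx => ?_⟩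
  · obtain ⟨z, hz⟩ := φ.exists_ne_zero hφ
    exact fun h0 => hz (by simpa using congr($h0 (g z)))
  · obtain ⟨c, hc⟩ := Submodule.mem_span_singleton.mp (hker _ (g.symm y) hx)
    exact Submodule.mem_span_singleton.mpr ⟨c, by rw [act_apply, ← map_smul]; exact congrArg g hc⟩

theorem HasHyperplaneIntoLine.of_mem_closure_orbit {n : ℕ} {ν lam : Bil n}
    (hν : HasHyperplaneIntoLine ν) (hlam : lam ∈ closure (orbit ν)) :
    HasHyperplaneIntoLine lam := by
  refine closure_minimal ?_ isClosed_setOf_hasHyperplaneIntoLine hlam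
  rintro _ ⟨g, rfl⟩
  exact hν.act g

theorem eq_sum_smul_e (x : Vn 5) : x = ∑ k, x k • e k := by
  funext j
  simp [e, Pi.single_apply, Finset.sum_apply]

theorem Bil.apply_eq_sum (ν : Bil 5) (x y : Vn 5) :
    ν x y = ∑ k, ∑ l, (x k * y l) • ν (e k) (e l) := by
  conv_lhs => rw [eq_sum_smul_e x, eq_sum_smul_e y]
  simp only [map_sum, map_smul, sum_apply, FunLike.coe_smul,
    Pi.smul_apply, Finset.smul_sum, smul_smul]
  rw [Finset.sum_comm]
  exact Finset.sum_congr rfl fun k _ => Finset.sum_congr rfl fun l _ => by rw [mul_comm]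

theorem apply_eq_of_tblA13 {μ : Bil 5} (hμ : ∀ i j : Fin 5, μ (e i) (e j) = tblA13 i j)
    (x y : Vn 5) :
    μ x y = (x 2 * y 2) • e 3 + (x 0 * y 1 + x 1 * y 0 + x 2 * y 3 + x 3 * y 2) • e 4 := by
  rw [Bil.apply_eq_sum]
  simp only [hμ, tblA13, Fin.sum_univ_five, Fin.isValue, Matrix.cons_val', Matrix.cons_val_zero,
    Matrix.cons_val_fin_one, Matrix.cons_val_one, Matrix.cons_val, smul_zero, zero_add, add_zero]
  module

theorem hasHyperplaneIntoLine_of_tblA13 {μ : Bil 5}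
    (hμ : ∀ i j : Fin 5, μ (e i) (e j) = tblA13 i j) : HasHyperplaneIntoLine μ := by
  refine ⟨ContinuousLinearMap.proj 2, e 4, fun h => ?_, fun h => ?_, fun x y hx => ?_⟩
  · simpa [e] using congr($h (e 2))
  · simpa [e] using congr($h 4)
  · have hx2 : x 2 = 0 := hx
    rw [apply_eq_of_tblA13 hμ, hx2, zero_mul, zero_smul, zero_add]
    exact Submodule.smul_mem _ _ (Submodule.mem_span_singleton_self _)

theorem e_notMem_span_singleton_of_e_mem {i j : Fin 5} (hij : i ≠ j) {w : Vn 5}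
    (hi : e i ∈ ℂ ∙ w) : e j ∉ ℂ ∙ w := by
  obtain ⟨a, ha⟩ := Submodule.mem_span_singleton.mp hi
  rintro hj
  obtain ⟨b, hb⟩ := Submodule.mem_span_singleton.mp hj
  have hai := congr($ha i)
  have haj := congr($ha j)
  have hbj := congr($hb j)
  simp only [Pi.smul_apply, smul_eq_mul, e, Pi.single_eq_same, Pi.single_eq_of_ne hij.symm,
    mul_eq_zero] at hai haj hbj
  simp [haj.resolve_left (left_ne_zero_of_mul_eq_one hai)] at hbj

theorem not_hasHyperplaneIntoLine_of_tblA12 {lam : Bil 5}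
    (hlam : ∀ i j : Fin 5, lam (e i) (e j) = tblA12 i j) : ¬ HasHyperplaneIntoLine lam := by
  rintro ⟨φ, w, -, -, hker⟩
  suffices e 3 ∈ ℂ ∙ w ∧ e 4 ∈ ℂ ∙ w from
    e_notMem_span_singleton_of_e_mem (by decide) this.1 this.2
  by_cases h0 : φ (e 0) = 0
  · exact ⟨by simpa [hlam, tblA12] using hker (e 0) (e 1) h0,
      by simpa [hlam, tblA12] using hker (e 0) (e 2) h0⟩
  · have hk : ∀ j, lam (φ (e 0) • e j - φ (e j) • e 0) (e 0) ∈ ℂ ∙ w := fun j =>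
      hker _ _ (by simp [mul_comm])
    have h1 := hk 1
    have h2 := hk 2
    simp only [map_sub, map_smul, sub_apply, smul_apply, hlam, tblA12, Fin.isValue,
      Matrix.cons_val', Matrix.cons_val_zero, Matrix.cons_val_fin_one, Matrix.cons_val_one,
      Matrix.cons_val, smul_zero, sub_zero] at h1 h2
    exact ⟨(Submodule.smul_mem_iff _ h0).mp h1, (Submodule.smul_mem_iff _ h0).mp h2⟩

/-- The $5$-dimensional nilpotent commutative associative algebra `𝐀13` does not degenerate to
`𝐀12`: the structure `λ` of `𝐀12` does NOT lie in the closure of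
the `GL(5, ℂ)`-orbit `O(μ)` of the structure `μ` of `𝐀13`. -/
theorem A13_not_deg_A12 (μ lam : Bil 5)
    (hμ : ∀ i j : Fin 5, μ (e i) (e j) = tblA13 i j)
    (hlam : ∀ i j : Fin 5, lam (e i) (e j) = tblA12 i j) :
    lam ∉ closure (orbit μ) := fun h =>
  not_hasHyperplaneIntoLine_of_tblA12 hlam
    ((hasHyperplaneIntoLine_of_tblA13 hμ).of_mem_closure_orbit h)
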